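/- arXiv:1206.4572 — 7 statements merged into one kernel-verified Lean document; each statement's English description precedes it below -/
import Mathlib

section
/- Let a be a binary sequence of length n, set a_0 := 0 and a_{n+1} := 0, and let δ = (δ_1,…,δ_{n+1}) be defined by δ_i := a_i − a_{i−1} for i = 1,…,n+1. Then for every k with 1 ≤ k ≤ n−1, C_{k+1}(a) − 2·C_k(a) + C_{k−1}(a) = −C_k(δ), where C_k(δ) := Σ_{i=1}^{n+1−k} δ_i·δ_{i+k}. -/
/-!
Writing `δ_i = a_i - a_{i-1}` and expanding, `C_k(δ)` splits into four correlation sums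
over `1 ≤ i ≤ n + 1 - k`. Since `a_0 = a_{n+1} = 0`, shifting the index by one and dropping
the vanishing boundary terms turns them into `C_k(a)`, `C_{k-1}(a)`, `C_{k+1}(a)` and `C_k(a)`
again, with signs `+, -, -, +`.
-/

/-- The `k`-th aperiodic autocorrelation of a sequence `a` of length `n`:
`C_k(a) = ∑_{i=1}^{n-k} a_i a_{i+k}` (so `C_n(a) = 0`). -/
def aperCorr (a : ℕ → ℤ) (n k : ℕ) : ℤ :=
  ∑ i ∈ Finset.Icc 1 (n - k), a i * a (i + k)

open Finset

theorem sum_Icc_pred_mul_eq_sum_Icc_mul_succ {R : Type*} [NonUnitalNonAssocSemiring R]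
    {a : ℕ → R} (h0 : a 0 = 0) (b : ℕ → R) (m : ℕ) :
    ∑ i ∈ Icc 1 (m + 1), a (i - 1) * b i = ∑ i ∈ Icc 1 m, a i * b (i + 1) := by
  induction m with
  | zero => simp [h0]
  | succ m ih => rw [sum_Icc_succ_top (by omega), ih, sum_Icc_succ_top (by omega)]; rfl

theorem aperCorr_eq_sum_Icc_of_top_eq_zero {a : ℕ → ℤ} {n k : ℕ} (htop : a (n + 1) = 0)
    (hk : k ≤ n) : aperCorr a n k = ∑ i ∈ Icc 1 (n + 1 - k), a i * a (i + k) := by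
  rw [aperCorr, show n + 1 - k = n - k + 1 by omega, sum_Icc_succ_top (by omega),
    show n - k + 1 + k = n + 1 by omega, htop, mul_zero, add_zero]

theorem sum_Icc_sub_pred_mul_sub_pred_eq_aperCorr {a : ℕ → ℤ} {n k : ℕ} (h0 : a 0 = 0)
    (htop : a (n + 1) = 0) (hk1 : 1 ≤ k) (hk2 : k + 1 ≤ n) :
    ∑ i ∈ Icc 1 (n + 1 - k), (a i - a (i - 1)) * (a (i + k) - a (i + k - 1))
      = 2 * aperCorr a n k - aperCorr a n (k + 1) - aperCorr a n (k - 1) := by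
  obtain ⟨m, hm⟩ : ∃ m, n - k = m + 1 := ⟨n - k - 1, by omega⟩
  have hrange : n + 1 - k = m + 1 + 1 := by omega
  have hA : ∑ i ∈ Icc 1 (n + 1 - k), a i * a (i + k) = aperCorr a n k :=
    (aperCorr_eq_sum_Icc_of_top_eq_zero htop (by omega)).symm
  have hB : ∑ i ∈ Icc 1 (n + 1 - k), a i * a (i + k - 1) = aperCorr a n (k - 1) := by
    rw [aperCorr, show n - (k - 1) = n + 1 - k by omega]
    exact sum_congr rfl fun i _ => by rw [Nat.add_sub_assoc hk1]
  have hC : ∑ i ∈ Icc 1 (n + 1 - k), a (i - 1) * a (i + k) = aperCorr a n (k + 1) := by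
    rw [hrange, sum_Icc_pred_mul_eq_sum_Icc_mul_succ h0 (fun i => a (i + k)),
      aperCorr_eq_sum_Icc_of_top_eq_zero htop hk2, show n + 1 - (k + 1) = m + 1 by omega]
    exact sum_congr rfl fun i _ => by rw [add_right_comm, add_assoc]
  have hD : ∑ i ∈ Icc 1 (n + 1 - k), a (i - 1) * a (i + k - 1) = aperCorr a n k := by
    rw [hrange, sum_Icc_pred_mul_eq_sum_Icc_mul_succ h0 (fun i => a (i + k - 1)), aperCorr, hm]
    exact sum_congr rfl fun i _ => by rw [add_right_comm, Nat.add_sub_cancel]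
  simp only [sub_mul, mul_sub, sum_sub_distrib, hA, hB, hC, hD]
  ring

theorem stmt_1_general (n : ℕ) (a : ℕ → ℤ)
    (h0 : a 0 = 0) (htop : a (n + 1) = 0)
    (δ : ℕ → ℤ) (hδ : ∀ i, 1 ≤ i → i ≤ n + 1 → δ i = a i - a (i - 1))
    (k : ℕ) (hk1 : 1 ≤ k) (hk2 : k ≤ n - 1) :
    aperCorr a n (k + 1) - 2 * aperCorr a n k + aperCorr a n (k - 1)
      = -(∑ i ∈ Finset.Icc 1 (n + 1 - k), δ i * δ (i + k)) := by
  have hδ_sum : ∑ i ∈ Icc 1 (n + 1 - k), δ i * δ (i + k)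
      = ∑ i ∈ Icc 1 (n + 1 - k), (a i - a (i - 1)) * (a (i + k) - a (i + k - 1)) := by
    refine sum_congr rfl fun i hi => ?_
    rw [mem_Icc] at hi
    rw [hδ i hi.1 (by omega), hδ (i + k) (by omega) (by omega)]
  rw [hδ_sum, sum_Icc_sub_pred_mul_sub_pred_eq_aperCorr h0 htop hk1 (by omega)]
  ring

theorem stmt_1 (n : ℕ) (a : ℕ → ℤ)
    (hbin : ∀ i, 1 ≤ i → i ≤ n → a i = 1 ∨ a i = -1)
    (h0 : a 0 = 0) (htop : a (n + 1) = 0)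
    (δ : ℕ → ℤ) (hδ : ∀ i, 1 ≤ i → i ≤ n + 1 → δ i = a i - a (i - 1))
    (k : ℕ) (hk1 : 1 ≤ k) (hk2 : k ≤ n - 1) :
    aperCorr a n (k + 1) - 2 * aperCorr a n k + aperCorr a n (k - 1)
      = -(∑ i ∈ Finset.Icc 1 (n + 1 - k), δ i * δ (i + k)) :=
  stmt_1_general n a h0 htop δ hδ k hk1 hk2
end

section
/- Let a be a binary sequence of length n, set a_0 := 0 and a_{n+1} := 0, and let δ_i := a_i − a_{i−1} for i = 1,…,n+1. Then for every k with 1 ≤ k ≤ n−1, Σ_{i=1}^{n+1−k} δ_i·δ_{i+k} = 2·R_k(a), i.e. the k-th correlation of δ equals twice the k-th component of the run vector of a. -/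
/-!
Term by term: `δ i * δ (i + k)` vanishes unless a run starts at `i` and a run ends at
`i + k - 1`, i.e. unless `a(i, i + k)` is a run block. For a ±1 sequence a jump across an
inner boundary has size `2`, while a jump from the padding `0` has size `1`; hence
`δ i = c * a i` and `δ (i + k) = -c' * a (i + k - 1)` with `c, c' ∈ {1, 2}`, and `c * c'`
is twice the weight factor because `k < n` rules out a block that is outer at both ends.
-/

/-- The `k`-th component of the run vector of the sequence `a` of length `n`
(with `a 0 = 0` and `a (n+1) = 0`): minus the sum of the weights of all run
blocks `a(i, i+k)` of `a` of length `k`, where a run block `a(i,j)` satisfies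
`a (i-1) ≠ a i` and `a (j-1) ≠ a j`, and its weight is `2 * a i * a (j-1)` if it
is inner (`1 < i` and `j < n+1`) and `a i * a (j-1)` otherwise. -/
def runVec (a : ℕ → ℤ) (n k : ℕ) : ℤ :=
  -∑ i ∈ Finset.Icc 1 (n + 1 - k),
    (if a (i - 1) ≠ a i ∧ a (i + k - 1) ≠ a (i + k) then
      (if 1 < i ∧ i + k < n + 1 then 2 else 1) * (a i * a (i + k - 1))
    else 0)

lemma sub_eq_two_mul_of_ne {x y : ℤ} (hx : x = 1 ∨ x = -1) (hy : y = 1 ∨ y = -1)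
    (h : y ≠ x) : x - y = 2 * x := by
  omega

lemma ite_two_one_mul_ite_two_one {p q : Prop} [Decidable p] [Decidable q] (h : p ∨ q) :
    ((if p then 2 else 1) * (if q then 2 else 1) : ℤ) = 2 * if p ∧ q then 2 else 1 := by
  by_cases hp : p <;> by_cases hq : q <;> simp_all

section RunBoundary

variable {n : ℕ} {a : ℕ → ℤ} (hbin : ∀ i, 1 ≤ i → i ≤ n → a i = 1 ∨ a i = -1)
include hbin

lemma sub_pred_eq_at_run_start (h0 : a 0 = 0) {i : ℕ} (hi1 : 1 ≤ i) (hin : i ≤ n)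
    (h : a (i - 1) ≠ a i) : a i - a (i - 1) = (if 1 < i then 2 else 1) * a i := by
  split_ifs with hi
  · exact sub_eq_two_mul_of_ne (hbin i hi1 hin) (hbin (i - 1) (by omega) (by omega)) h
  · obtain rfl : i = 1 := by omega
    simp [h0]

lemma sub_pred_eq_at_run_end (htop : a (n + 1) = 0) {m : ℕ} (hm2 : 2 ≤ m) (hmn : m ≤ n + 1)
    (h : a (m - 1) ≠ a m) :
    a m - a (m - 1) = -((if m < n + 1 then 2 else 1) * a (m - 1)) := by
  split_ifs with hm
  · have := sub_eq_two_mul_of_ne (hbin (m - 1) (by omega) (by omega)) (hbin m (by omega) (by omega))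
      h.symm
    linarith
  · obtain rfl : m = n + 1 := by omega
    simp [htop]

lemma sub_pred_mul_sub_pred_eq (h0 : a 0 = 0) (htop : a (n + 1) = 0) {i k : ℕ} (hk : 1 ≤ k)
    (hi1 : 1 ≤ i) (hikn : i + k ≤ n + 1) (hinner : 1 < i ∨ i + k < n + 1) :
    (a i - a (i - 1)) * (a (i + k) - a (i + k - 1)) =
      -2 * if a (i - 1) ≠ a i ∧ a (i + k - 1) ≠ a (i + k) then
        (if 1 < i ∧ i + k < n + 1 then 2 else 1) * (a i * a (i + k - 1)) else 0 := by
  by_cases hrun : a (i - 1) ≠ a i ∧ a (i + k - 1) ≠ a (i + k)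
  · rw [if_pos hrun, sub_pred_eq_at_run_start hbin h0 hi1 (by omega) hrun.1,
      sub_pred_eq_at_run_end hbin htop (by omega) hikn hrun.2]
    linear_combination (-a i * a (i + k - 1)) * ite_two_one_mul_ite_two_one hinner
  · rw [if_neg hrun, mul_zero]
    obtain hstart | hend := not_and_or.mp hrun
    · rw [not_not.mp hstart, sub_self, zero_mul]
    · rw [not_not.mp hend, sub_self, mul_zero]

end RunBoundary

theorem stmt_2 (n : ℕ) (a : ℕ → ℤ)
    (hbin : ∀ i, 1 ≤ i → i ≤ n → a i = 1 ∨ a i = -1)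
    (h0 : a 0 = 0) (htop : a (n + 1) = 0)
    (δ : ℕ → ℤ) (hδ : ∀ i, 1 ≤ i → i ≤ n + 1 → δ i = a i - a (i - 1))
    (k : ℕ) (hk1 : 1 ≤ k) (hk2 : k ≤ n - 1) :
    (∑ i ∈ Finset.Icc 1 (n + 1 - k), δ i * δ (i + k)) = 2 * runVec a n k := by
  rw [runVec, mul_neg, ← neg_mul, Finset.mul_sum]
  refine Finset.sum_congr rfl fun i hi => ?_
  obtain ⟨hi1, hik⟩ := Finset.mem_Icc.mp hi
  rw [hδ i hi1 (by omega), hδ (i + k) (by omega) (by omega)]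
  exact sub_pred_mul_sub_pred_eq hbin h0 htop hk1 hi1 (by omega) (by omega)
end

section
/- Let a be a binary sequence of length n. Then for every k with 1 ≤ k ≤ n−1, C_{k+1}(a) − 2·C_k(a) + C_{k−1}(a) = −2·R_k(a). -/
/-!
With the padding `a 0 = a (n + 1) = 0`, every correlation `C_j` is a sum over a full window, and
summation by parts turns `C_{k+1} - 2 C_k + C_{k-1}` into
`-∑ᵢ (a_{i-1} - a_i) (a_{i+k-1} - a_{i+k})`.
The `i`-th summand vanishes unless `a(i, i+k)` is a run block, and then it is `-2` times the
block's weight: a sign change inside the sequence is a jump of size `2`, a step onto the padding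
a jump of size `1`.
-/

open Finset

lemma sub_mul_sub_eq_neg_two_mul_runWeight {x y u v : ℤ} (hx : x = 0 ∨ x = 1 ∨ x = -1)
    (hy : y = 1 ∨ y = -1) (hu : u = 1 ∨ u = -1) (hv : v = 0 ∨ v = 1 ∨ v = -1)
    (hxv : x ≠ 0 ∨ v ≠ 0) :
    (x - y) * (u - v) =
      -2 * if x ≠ y ∧ u ≠ v then (if x ≠ 0 ∧ v ≠ 0 then 2 else 1) * (y * u) else 0 := by
  rcases hx with rfl | rfl | rfl <;> rcases hy with rfl | rfl <;> rcases hu with rfl | rfl <;>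
    rcases hv with rfl | rfl | rfl <;> simp_all

lemma sum_Icc_one_eq_sum_range {β : Type*} [AddCommMonoid β] (f : ℕ → β) (m : ℕ) :
    ∑ i ∈ Icc 1 m, f i = ∑ j ∈ range m, f (j + 1) := by
  rw [← Ico_add_one_right_eq_Icc, sum_Ico_eq_sum_range, Nat.add_sub_cancel]
  simp only [add_comm]

lemma sum_range_sub_mul_sub {R : Type*} [CommRing R] (f : ℕ → R) {M k : ℕ} (hk : 1 ≤ k)
    (h0 : f 0 = 0) (hend : f (M + k) = 0) :
    ∑ j ∈ range M, (f j - f (j + 1)) * (f (j + k) - f (j + k + 1)) =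
      2 * ∑ j ∈ range (M + 1), f j * f (j + k) - ∑ j ∈ range M, f j * f (j + (k + 1))
        - ∑ j ∈ range (M + 2), f j * f (j + (k - 1)) := by
  obtain ⟨l, rfl⟩ : ∃ l, k = l + 1 := ⟨k - 1, by omega⟩
  have hlast : ∑ j ∈ range (M + 1), f j * f (j + (l + 1)) =
      ∑ j ∈ range M, f j * f (j + (l + 1)) := by
    rw [sum_range_succ, hend, mul_zero, add_zero]
  have hfirst : ∑ j ∈ range (M + 1), f j * f (j + (l + 1)) =
      ∑ j ∈ range M, f (j + 1) * f (j + l + 2) := by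
    rw [sum_range_succ', h0, zero_mul, add_zero]
    exact sum_congr rfl fun j _ => by ring_nf
  have hends : ∑ j ∈ range (M + 2), f j * f (j + (l + 1 - 1)) =
      ∑ j ∈ range M, f (j + 1) * f (j + l + 1) := by
    rw [sum_range_succ, sum_range_succ', Nat.add_sub_cancel, h0, zero_mul, add_zero,
      show M + 1 + l = M + (l + 1) by ring, hend, mul_zero, add_zero]
    exact sum_congr rfl fun j _ => by ring_nf
  rw [two_mul]
  nth_rewrite 1 [hlast]
  rw [hfirst, hends, ← sum_add_distrib, ← sum_sub_distrib, ← sum_sub_distrib]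
  exact sum_congr rfl fun j _ => by ring_nf

section Padded

variable {a : ℕ → ℤ} {n : ℕ}

lemma aperCorr_eq_sum_range (h0 : a 0 = 0) (htop : a (n + 1) = 0) (k : ℕ) :
    aperCorr a n k = ∑ i ∈ range (n + 2 - k), a i * a (i + k) := by
  rw [aperCorr]
  rcases le_or_gt k n with hk | hk
  · obtain ⟨m, rfl⟩ : ∃ m, n = k + m := ⟨n - k, by omega⟩
    rw [show k + m + 2 - k = m + 1 + 1 by omega, sum_range_succ, sum_range_succ', h0, zero_mul,
      show m + 1 + k = k + m + 1 by ring, htop, mul_zero, add_zero, add_zero,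
      show k + m - k = m by omega, sum_Icc_one_eq_sum_range]
  · rw [Nat.sub_eq_zero_of_le hk.le, Icc_eq_empty (by omega), sum_empty, eq_comm]
    refine sum_eq_zero fun i hi => ?_
    rw [show i = 0 by simp at hi; omega, h0, zero_mul]

lemma aperCorr_second_diff (h0 : a 0 = 0) (htop : a (n + 1) = 0) {k : ℕ} (hk1 : 1 ≤ k)
    (hkn : k ≤ n) :
    aperCorr a n (k + 1) - 2 * aperCorr a n k + aperCorr a n (k - 1) =
      -∑ i ∈ Icc 1 (n + 1 - k), (a (i - 1) - a i) * (a (i + k - 1) - a (i + k)) := by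
  have hend : a (n + 1 - k + k) = 0 := by rwa [Nat.sub_add_cancel (by omega)]
  rw [aperCorr_eq_sum_range h0 htop, aperCorr_eq_sum_range h0 htop,
    aperCorr_eq_sum_range h0 htop, sum_Icc_one_eq_sum_range,
    show n + 2 - (k + 1) = n + 1 - k by omega, show n + 2 - k = n + 1 - k + 1 by omega,
    show n + 2 - (k - 1) = n + 1 - k + 2 by omega]
  simp only [Nat.add_sub_cancel, add_right_comm _ 1 k]
  rw [sum_range_sub_mul_sub a hk1 h0 hend]
  ring

end Padded

namespace BinarySeq

variable {a : ℕ → ℤ} {n : ℕ}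
variable (hbin : ∀ i, 1 ≤ i → i ≤ n → a i = 1 ∨ a i = -1) (h0 : a 0 = 0)
  (htop : a (n + 1) = 0)
include hbin h0 htop

lemma eq_zero_or_eq_one_or_eq_neg_one {j : ℕ} (hj : j ≤ n + 1) :
    a j = 0 ∨ a j = 1 ∨ a j = -1 := by
  rcases Nat.eq_zero_or_pos j with rfl | hj0
  · exact Or.inl h0
  rcases hj.eq_or_lt with rfl | hjn
  · exact Or.inl htop
  exact Or.inr (hbin j hj0 (by omega))

lemma ne_zero_iff {j : ℕ} (hj : j ≤ n + 1) : a j ≠ 0 ↔ 1 ≤ j ∧ j ≤ n := by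
  constructor
  · intro hne
    refine ⟨Nat.one_le_iff_ne_zero.2 fun h => hne (h ▸ h0), ?_⟩
    by_contra! h
    exact hne (show j = n + 1 by omega ▸ htop)
  · rintro ⟨h1, h2⟩
    rcases hbin j h1 h2 with h | h <;> simp [h]

lemma sub_mul_sub_eq_runVec_term {k i : ℕ} (hk1 : 1 ≤ k) (hkn : k < n)
    (hi : i ∈ Icc 1 (n + 1 - k)) :
    (a (i - 1) - a i) * (a (i + k - 1) - a (i + k)) =
      -2 * if a (i - 1) ≠ a i ∧ a (i + k - 1) ≠ a (i + k) then
        (if 1 < i ∧ i + k < n + 1 then 2 else 1) * (a i * a (i + k - 1)) else 0 := by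
  rw [mem_Icc] at hi
  have hinner : (1 < i ∧ i + k < n + 1) ↔ (a (i - 1) ≠ 0 ∧ a (i + k) ≠ 0) := by
    rw [ne_zero_iff hbin h0 htop (by omega), ne_zero_iff hbin h0 htop (by omega)]
    omega
  have hval : ∀ j ≤ n + 1, a j = 0 ∨ a j = 1 ∨ a j = -1 :=
    fun _ => eq_zero_or_eq_one_or_eq_neg_one hbin h0 htop
  simp only [if_congr hinner rfl rfl]
  refine sub_mul_sub_eq_neg_two_mul_runWeight (hval _ (by omega)) (hbin i (by omega) (by omega))
    (hbin (i + k - 1) (by omega) (by omega)) (hval _ (by omega)) ?_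
  rcases eq_or_ne i 1 with rfl | hi1
  · exact Or.inr ((ne_zero_iff hbin h0 htop (by omega)).2 (by omega))
  · exact Or.inl ((ne_zero_iff hbin h0 htop (by omega)).2 (by omega))

end BinarySeq

theorem stmt_3 (n : ℕ) (a : ℕ → ℤ)
    (hbin : ∀ i, 1 ≤ i → i ≤ n → a i = 1 ∨ a i = -1)
    (h0 : a 0 = 0) (htop : a (n + 1) = 0)
    (k : ℕ) (hk1 : 1 ≤ k) (hk2 : k ≤ n - 1) :
    aperCorr a n (k + 1) - 2 * aperCorr a n k + aperCorr a n (k - 1)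
      = -2 * runVec a n k := by
  rw [aperCorr_second_diff h0 htop hk1 (by omega),
    sum_congr rfl fun i hi => BinarySeq.sub_mul_sub_eq_runVec_term hbin h0 htop hk1 (by omega) hi,
    ← mul_sum, runVec]
  ring
end

section
/- Let a be a binary sequence of length n ≥ 2 with γ runs. Then Σ_{k=1}^{n−1} R_k(a) = −γ if γ is even, and Σ_{k=1}^{n−1} R_k(a) = 1 − γ if γ is odd. -/
/-- The number of runs of the sequence `a` of length `n` (with `a 0 = 0`). -/
def numRuns (a : ℕ → ℤ) (n : ℕ) : ℕ :=
  ((Finset.Icc 1 n).filter (fun i => a i ≠ a (i - 1))).card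

/-!
Split the weight of a run block `a(i, j)` as `[1 < i] + [j < n + 1]`: this is `2` on inner and
`1` on outer blocks, and `0` on the whole sequence `a(1, n + 1)`, the only block of length `n`.
For a fixed start `i`, the sum over the ends `j` then telescopes, because at an interior run
boundary `2 a_{j-1} = a_{j-1} - a_j`; summing over `i` gives `2 ∑ R_k = 1 + a_1 a_n - 2γ`.
Since the sign flips exactly at the `γ - 1` interior run boundaries, `a_1 a_n = (-1)^(γ + 1)`.
-/

open Finset

theorem sum_Icc_sum_Icc_add_eq_sum_Icc_sum_Ioc {M : Type*} [AddCommMonoid M] (n : ℕ)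
    (g : ℕ → ℕ → M) :
    ∑ k ∈ Icc 1 n, ∑ i ∈ Icc 1 (n + 1 - k), g i (i + k) =
      ∑ i ∈ Icc 1 n, ∑ j ∈ Ioc i (n + 1), g i j := by
  rw [sum_comm' (t' := Icc 1 n) (s' := fun i => Icc 1 (n + 1 - i))
    (fun k i => by simp only [mem_Icc]; omega)]
  refine sum_congr rfl fun i _ => ?_
  exact sum_nbij' (i + ·) (· - i) (by intro k; simp; omega) (by intro j; simp; omega)
    (by intro k _; simp) (by intro j hj; simp at hj ⊢; omega) (fun _ _ => rfl)

theorem two_mul_ite_ne {x y : ℤ} (hx : x = 1 ∨ x = -1) (hy : y = 1 ∨ y = -1) :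
    2 * (if x ≠ y then x else 0) = x - y := by
  rcases hx with rfl | rfl <;> rcases hy with rfl | rfl <;> norm_num

theorem numRuns_succ (a : ℕ → ℤ) (m : ℕ) :
    numRuns a (m + 1) = numRuns a m + if a (m + 1) ≠ a m then 1 else 0 := by
  simp only [numRuns, card_filter, sum_Icc_succ_top (Nat.le_add_left 1 m), Nat.add_sub_cancel]

namespace RunVector

def runStartVal (a : ℕ → ℤ) (i : ℕ) : ℤ := if a (i - 1) ≠ a i then a i else 0

def runEndVal (a : ℕ → ℤ) (j : ℕ) : ℤ := if a (j - 1) ≠ a j then a (j - 1) else 0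

def splitWeight (n i j : ℕ) : ℤ := (if 1 < i then 1 else 0) + (if j < n + 1 then 1 else 0)

variable {a : ℕ → ℤ} {n : ℕ}

theorem runVec_eq_sum_splitWeight {k : ℕ} (hk : k < n) :
    runVec a n k = -∑ i ∈ Icc 1 (n + 1 - k),
      splitWeight n i (i + k) * (runStartVal a i * runEndVal a (i + k)) := by
  unfold runVec
  congr 1
  refine sum_congr rfl fun i hi => ?_
  simp only [mem_Icc] at hi
  unfold splitWeight runStartVal runEndVal
  split_ifs <;> omega

theorem sum_runVec_eq_sum_splitWeight (hn : 0 < n) :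
    ∑ k ∈ Icc 1 (n - 1), runVec a n k = -∑ i ∈ Icc 1 n, ∑ j ∈ Ioc i (n + 1),
      splitWeight n i j * (runStartVal a i * runEndVal a j) := by
  have hlast : ∑ i ∈ Icc 1 (n + 1 - n), splitWeight n i (i + n) *
      (runStartVal a i * runEndVal a (i + n)) = 0 := by
    simp [splitWeight]
  rw [← sum_Icc_sum_Icc_add_eq_sum_Icc_sum_Ioc, ← Nat.sub_add_cancel hn,
    sum_Icc_succ_top (by omega), Nat.sub_add_cancel hn, hlast, add_zero, ← sum_neg_distrib]
  exact sum_congr rfl fun k hk => runVec_eq_sum_splitWeight (by simp at hk; omega)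

variable (hbin : ∀ i, 1 ≤ i → i ≤ n → a i = 1 ∨ a i = -1)
include hbin

theorem two_mul_sum_runEndVal {i m : ℕ} (hi : 1 ≤ i) (him : i ≤ m) (hm : m ≤ n) :
    2 * ∑ j ∈ Ioc i m, runEndVal a j = a i - a m := by
  induction m, him using Nat.le_induction with
  | base => simp
  | succ m him ih =>
    rw [sum_Ioc_succ_top him, mul_add, ih (by omega), runEndVal, Nat.add_sub_cancel,
      two_mul_ite_ne (hbin m (by omega) (by omega)) (hbin (m + 1) (by omega) hm)]
    ring

theorem two_mul_sum_splitWeight (h0 : a 0 = 0) (htop : a (n + 1) = 0) {i : ℕ}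
    (hi : 1 ≤ i) (hin : i ≤ n) :
    2 * ∑ j ∈ Ioc i (n + 1), splitWeight n i j * (runStartVal a i * runEndVal a j) =
      2 * (if a (i - 1) ≠ a i then 1 else 0) - (if i = 1 then 1 + a 1 * a n else 0) := by
  have hai := hbin i hi hin
  have hsq : a i * a i = 1 := by rcases hai with h | h <;> simp [h]
  have hend : runEndVal a (n + 1) = a n := by
    rcases hbin n (by omega) le_rfl with h | h <;> simp [runEndVal, h, htop]
  have hsplit : ∑ j ∈ Ioc i (n + 1), splitWeight n i j * (runStartVal a i * runEndVal a j) =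
      runStartVal a i * ((if 1 < i then 1 else 0) * runEndVal a (n + 1) +
        (if 1 < i then 2 else 1) * ∑ j ∈ Ioc i n, runEndVal a j) := by
    have hinner : ∀ j ∈ Ioc i n, splitWeight n i j * (runStartVal a i * runEndVal a j) =
        runStartVal a i * ((if 1 < i then 2 else 1) * runEndVal a j) := by
      intro j hj
      simp only [mem_Ioc] at hj
      simp only [splitWeight, if_pos (show j < n + 1 by omega)]
      split_ifs <;> ring
    rw [sum_Ioc_succ_top hin, sum_congr rfl hinner, ← mul_sum, ← mul_sum]
    simp only [splitWeight, lt_irrefl, if_false, add_zero]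
    ring
  have htel := two_mul_sum_runEndVal hbin hi hin le_rfl
  rw [hsplit, hend]
  rcases Nat.lt_or_ge 1 i with h1 | h1
  · have hstart : runStartVal a i * a i = if a (i - 1) ≠ a i then 1 else 0 := by
      rw [runStartVal, ite_mul, zero_mul, hsq]
    simp only [if_pos h1, if_neg (show i ≠ 1 by omega)]
    linear_combination (2 * runStartVal a i) * htel + 2 * hstart
  · obtain rfl : i = 1 := by omega
    have hstart : a 0 ≠ a 1 := by rcases hai with h | h <;> simp [h, h0]
    simp only [runStartVal, Nat.sub_self, if_pos hstart, lt_irrefl, if_false, if_true]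
    linear_combination a 1 * htel + hsq

theorem two_mul_sum_runVec (h0 : a 0 = 0) (htop : a (n + 1) = 0) (hn : 0 < n) :
    2 * ∑ k ∈ Icc 1 (n - 1), runVec a n k = 1 + a 1 * a n - 2 * numRuns a n := by
  have hrow : ∀ i ∈ Icc 1 n,
      2 * ∑ j ∈ Ioc i (n + 1), splitWeight n i j * (runStartVal a i * runEndVal a j) =
        2 * (if a (i - 1) ≠ a i then 1 else 0) - (if i = 1 then 1 + a 1 * a n else 0) :=
    fun i hi => two_mul_sum_splitWeight hbin h0 htop (mem_Icc.1 hi).1 (mem_Icc.1 hi).2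
  have hruns : ∑ i ∈ Icc 1 n, (if a (i - 1) ≠ a i then 1 else 0 : ℤ) = numRuns a n := by
    simp only [numRuns, natCast_card_filter, ne_comm]
  rw [sum_runVec_eq_sum_splitWeight hn, mul_neg, mul_sum, sum_congr rfl hrow, sum_sub_distrib,
    ← mul_sum, hruns, sum_ite_eq', if_pos (mem_Icc.2 ⟨le_rfl, hn⟩)]
  ring

theorem first_mul_eq_neg_neg_one_pow_numRuns (h0 : a 0 = 0) {m : ℕ} (hm : 1 ≤ m) (hmn : m ≤ n) :
    a 1 * a m = -(-1) ^ numRuns a m := by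
  induction m, hm using Nat.le_induction with
  | base =>
    have ha1 := hbin 1 le_rfl hmn
    have hruns : numRuns a 1 = 1 := by
      rw [numRuns_succ, if_pos (by rcases ha1 with h | h <;> simp [h, h0])]
      simp [numRuns]
    rcases ha1 with h | h <;> simp [hruns, h]
  | succ m hm ih =>
    rw [numRuns_succ]
    rcases hbin m hm (by omega) with h | h <;> rcases hbin (m + 1) (by omega) hmn with h' | h' <;>
      simp [h, h', pow_succ, ← ih (by omega)]

end RunVector

theorem stmt_8_general (n : ℕ) (a : ℕ → ℤ)
    (hbin : ∀ i, 1 ≤ i → i ≤ n → a i = 1 ∨ a i = -1)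
    (h0 : a 0 = 0) (htop : a (n + 1) = 0) :
    (Even (numRuns a n) →
      ∑ k ∈ Finset.Icc 1 (n - 1), runVec a n k = -(numRuns a n : ℤ)) ∧
    (Odd (numRuns a n) →
      ∑ k ∈ Finset.Icc 1 (n - 1), runVec a n k = 1 - (numRuns a n : ℤ)) := by
  rcases Nat.eq_zero_or_pos n with rfl | hn
  · simp [numRuns]
  have hsum := RunVector.two_mul_sum_runVec hbin h0 htop hn
  have hsign := RunVector.first_mul_eq_neg_neg_one_pow_numRuns hbin h0 hn le_rfl
  constructor
  · intro heven
    rw [heven.neg_one_pow] at hsign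
    linarith
  · intro hodd
    rw [hodd.neg_one_pow] at hsign
    linarith

theorem stmt_8 (n : ℕ) (hn : 2 ≤ n) (a : ℕ → ℤ)
    (hbin : ∀ i, 1 ≤ i → i ≤ n → a i = 1 ∨ a i = -1)
    (h0 : a 0 = 0) (htop : a (n + 1) = 0) :
    (Even (numRuns a n) →
      ∑ k ∈ Finset.Icc 1 (n - 1), runVec a n k = -(numRuns a n : ℤ)) ∧
    (Odd (numRuns a n) →
      ∑ k ∈ Finset.Icc 1 (n - 1), runVec a n k = 1 - (numRuns a n : ℤ)) :=
  stmt_8_general n a hbin h0 htop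
end

section
/- Let a be a binary sequence of length n with γ runs and run length encoding r = (r_1,…,r_γ). Then for every k with 1 ≤ k ≤ n−1, R_k(a) = f_S(k) + (−1)^γ·f_S(n−k) + 2·Σ_{j=1}^{γ−1} (−1)^j·f_S(s_j − k). -/
/-!
Write `d x = a (x + 1) - a x` for the difference sequence of the zero-padded sequence. A run
block `a(i, i + k)` has weight `2` exactly when both of its ends are inner run boundaries, where
`|d| = 2`, and weight `1` when one end is `0` or `n`, where `|d| = 1`; in every case
`-2 w(a(i, i + k)) a_i a_{i+k-1} = d (i - 1) d (i + k - 1)`, so `2 R_k(a) = ∑ x, d x d (x + k)`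
is the aperiodic autocorrelation of `d`. Since the run starting at `s_j + 1` has sign
`a_1 (-1)^j`, the differences are `d = a_1 (δ_0 + 2 f_S + (-1)^γ δ_n)`, and expanding the
autocorrelation of this sum (using `a_1² = 1` and `1 ≤ k < n`) gives the three terms.
-/

open Finset

lemma neg_two_mul_weight_eq_mul_sub {p q u v : ℤ} (hp : p = 1 ∨ p = -1 ∨ p = 0)
    (hq : q = 1 ∨ q = -1) (hu : u = 1 ∨ u = -1) (hv : v = 1 ∨ v = -1 ∨ v = 0)
    (hpv : p ≠ 0 ∨ v ≠ 0) :
    -(2 * if p ≠ q ∧ u ≠ v then (if p ≠ 0 ∧ v ≠ 0 then 2 else 1) * (q * u) else 0)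
      = (q - p) * (v - u) := by
  rcases hp with rfl | rfl | rfl <;> rcases hq with rfl | rfl <;> rcases hu with rfl | rfl <;>
    rcases hv with rfl | rfl | rfl <;> simp at hpv ⊢

theorem two_mul_runVec_eq_sum_mul_sub (a : ℕ → ℤ) (n k : ℕ)
    (hbin : ∀ i, 1 ≤ i → i ≤ n → a i = 1 ∨ a i = -1) (h0 : a 0 = 0) (htop : a (n + 1) = 0)
    (hk1 : 1 ≤ k) (hk2 : k < n) :
    2 * runVec a n k
      = ∑ x ∈ range (n + 1 - k), (a (x + 1) - a x) * (a (x + k + 1) - a (x + k)) := by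
  have hne : ∀ i ≤ n + 1, a i ≠ 0 ↔ 1 ≤ i ∧ i ≤ n := fun i hi => by
    refine ⟨fun ha => ⟨?_, ?_⟩, fun hmem => by rcases hbin i hmem.1 hmem.2 with h | h <;> simp [h]⟩
    · exact Nat.one_le_iff_ne_zero.2 (by rintro rfl; exact ha h0)
    · exact Nat.le_of_lt_succ (lt_of_le_of_ne hi (by rintro rfl; exact ha htop))
  have hval : ∀ i ≤ n + 1, a i = 1 ∨ a i = -1 ∨ a i = 0 := fun i hi => by
    by_cases h : 1 ≤ i ∧ i ≤ n
    · exact (hbin i h.1 h.2).imp_right Or.inl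
    · exact Or.inr (Or.inr (not_not.1 (mt (hne i hi).1 h)))
  rw [runVec, mul_neg, mul_sum, ← sum_neg_distrib, ← Ico_add_one_right_eq_Icc,
    sum_Ico_eq_sum_range, Nat.add_sub_cancel]
  refine sum_congr rfl fun x hx => ?_
  rw [mem_range] at hx
  rw [add_comm 1 x, Nat.add_sub_cancel, show x + 1 + k - 1 = x + k by omega,
    Nat.add_right_comm x 1 k]
  have hinner : (1 < x + 1 ∧ x + k + 1 < n + 1) ↔ (a x ≠ 0 ∧ a (x + k + 1) ≠ 0) := by
    rw [hne x (by omega), hne (x + k + 1) (by omega)]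
    omega
  simp only [hinner]
  refine neg_two_mul_weight_eq_mul_sub (hval x (by omega)) (hbin _ (by omega) (by omega))
    (hbin _ (by omega) (by omega)) (hval _ (by omega)) ?_
  rw [hne x (by omega), hne (x + k + 1) (by omega)]
  omega

theorem exists_le_lt_succ_of_le_of_lt (I : ℕ → ℕ) {i : ℕ} :
    ∀ {γ : ℕ}, I 1 ≤ i → i < I (γ + 1) → ∃ j, 1 ≤ j ∧ j ≤ γ ∧ I j ≤ i ∧ i < I (j + 1)
  | 0, h1, hγ => absurd h1 (not_le.2 hγ)
  | γ + 1, h1, hγ => by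
    by_cases hi : i < I (γ + 1)
    · obtain ⟨j, hj1, hjγ, hj⟩ := exists_le_lt_succ_of_le_of_lt I h1 hi
      exact ⟨j, hj1, by omega, hj⟩
    · exact ⟨γ + 1, by omega, le_rfl, not_lt.1 hi, hγ⟩

lemma eq_neg_of_ne_of_pm_one {u v : ℤ} (hu : u = 1 ∨ u = -1) (hv : v = 1 ∨ v = -1) (huv : u ≠ v) :
    v = -u := by
  rcases hu with rfl | rfl <;> rcases hv with rfl | rfl <;> simp at huv ⊢

structure IsRunStarts (a : ℕ → ℤ) (n γ : ℕ) (I : ℕ → ℕ) : Prop where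
  first : I 1 = 1
  last : I (γ + 1) = n + 1
  lt_succ : ∀ j, 1 ≤ j → j ≤ γ → I j < I (j + 1)
  apply_pred_ne : ∀ j, 2 ≤ j → j ≤ γ → a (I j - 1) ≠ a (I j)
  apply_eq : ∀ j, 1 ≤ j → j ≤ γ → ∀ p, I j ≤ p → p < I (j + 1) → a p = a (I j)

namespace IsRunStarts

variable {a : ℕ → ℤ} {n γ : ℕ} {I : ℕ → ℕ}

theorem pos (h : IsRunStarts a n γ I) (hn : 0 < n) : 0 < γ :=
  Nat.pos_of_ne_zero fun hγ => by
    have := h.last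
    rw [hγ, h.first] at this
    omega

theorem strictMonoOn (h : IsRunStarts a n γ I) : StrictMonoOn I (Set.Icc 1 (γ + 1)) :=
  strictMonoOn_of_lt_add_one Set.ordConnected_Icc fun j _ hj hj' =>
    h.lt_succ j hj.1 (by simpa using hj'.2)

theorem lt_of_lt (h : IsRunStarts a n γ I) {j j' : ℕ} (hj : 1 ≤ j) (hjj' : j < j')
    (hj' : j' ≤ γ + 1) : I j < I j' :=
  h.strictMonoOn ⟨hj, by omega⟩ ⟨by omega, hj'⟩ hjj'

theorem apply_mem_Icc (h : IsRunStarts a n γ I) {j : ℕ} (hj : 1 ≤ j) (hjγ : j ≤ γ) :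
    1 ≤ I j ∧ I j ≤ n := by
  have h1 := h.strictMonoOn.monotoneOn ⟨le_rfl, by omega⟩ ⟨hj, by omega⟩ hj
  have h2 := h.lt_of_lt hj (Nat.lt_succ_of_le hjγ) le_rfl
  rw [h.first] at h1
  rw [h.last] at h2
  omega

theorem apply_sub_one_eq (h : IsRunStarts a n γ I) {j : ℕ} (hj : 1 ≤ j) (hjγ : j ≤ γ) :
    a (I (j + 1) - 1) = a (I j) :=
  have := h.lt_succ j hj hjγ
  h.apply_eq j hj hjγ _ (by omega) (by omega)

theorem apply_add_one_eq_sign (h : IsRunStarts a n γ I)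
    (hbin : ∀ i, 1 ≤ i → i ≤ n → a i = 1 ∨ a i = -1) :
    ∀ j < γ, a (I (j + 1)) = a 1 * (-1) ^ j
  | 0, _ => by rw [h.first]; ring
  | j + 1, hj => by
    have hval : ∀ i, 1 ≤ i → i ≤ γ → a (I i) = 1 ∨ a (I i) = -1 := fun i hi hiγ =>
      hbin _ (h.apply_mem_Icc hi hiγ).1 (h.apply_mem_Icc hi hiγ).2
    have hne := h.apply_pred_ne (j + 2) (by omega) hj
    rw [h.apply_sub_one_eq (by omega) (by omega)] at hne
    rw [eq_neg_of_ne_of_pm_one (hval _ (by omega) (by omega)) (hval _ (by omega) hj) hne,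
      h.apply_add_one_eq_sign hbin j (by omega), pow_succ]
    ring

theorem apply_add_one_eq_of_forall_ne (h : IsRunStarts a n γ I) {x : ℕ} (hx : x < n)
    (hne : ∀ j, 1 ≤ j → j ≤ γ → I j ≠ x + 1) : a (x + 1) = a x := by
  obtain ⟨j, hj1, hjγ, hle, hlt⟩ := exists_le_lt_succ_of_le_of_lt I
    (by rw [h.first]; omega) (by rw [h.last]; omega : x + 1 < I (γ + 1))
  have hle' : I j ≤ x := by have := hne j hj1 hjγ; omega
  rw [h.apply_eq j hj1 hjγ _ hle hlt, h.apply_eq j hj1 hjγ _ hle' (by omega)]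

theorem apply_add_one_sub_apply_last (h : IsRunStarts a n γ I)
    (hbin : ∀ i, 1 ≤ i → i ≤ n → a i = 1 ∨ a i = -1)
    (htop : a (n + 1) = 0) (hγ : 0 < γ) : a (n + 1) - a n = a 1 * (-1) ^ γ := by
  obtain ⟨g, rfl⟩ : ∃ g, γ = g + 1 := ⟨γ - 1, by omega⟩
  have hlast := h.apply_sub_one_eq (j := g + 1) (by omega) le_rfl
  rw [h.last, Nat.add_sub_cancel] at hlast
  rw [htop, hlast, h.apply_add_one_eq_sign hbin g (by omega), pow_succ]
  ring

theorem sum_Icc_sub_add_one (h : IsRunStarts a n γ I) :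
    ∀ j ≤ γ, ∑ t ∈ Icc 1 j, (I (t + 1) - I t) + 1 = I (j + 1)
  | 0, _ => by simp [h.first]
  | j + 1, hj => by
    rw [sum_Icc_succ_top (by omega), add_right_comm, h.sum_Icc_sub_add_one j (by omega)]
    have := h.lt_succ (j + 1) (by omega) hj
    omega

theorem add_one_mem_Icc (h : IsRunStarts a n γ I) {s : ℕ → ℕ}
    (hsI : ∀ j, 1 ≤ j → j < γ → s j + 1 = I (j + 1)) {j : ℕ}
    (hj : j ∈ Icc 1 (γ - 1)) : 1 ≤ s j ∧ s j < n := by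
  rw [mem_Icc] at hj
  have h1 := h.lt_of_lt (j := 1) le_rfl (by omega : 1 < j + 1) (by omega)
  have h2 := h.lt_of_lt (by omega : 1 ≤ j + 1) (by omega : j + 1 < γ + 1) le_rfl
  rw [← hsI j hj.1 (by omega), h.first] at h1
  rw [← hsI j hj.1 (by omega), h.last] at h2
  omega

theorem injOn_of_add_one_eq (h : IsRunStarts a n γ I) {s : ℕ → ℕ}
    (hsI : ∀ j, 1 ≤ j → j < γ → s j + 1 = I (j + 1)) :
    Set.InjOn s (Icc 1 (γ - 1)) := fun j hj j' hj' hjj' => by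
  rw [coe_Icc, Set.mem_Icc] at hj hj'
  have := h.strictMonoOn.injOn (x₁ := j + 1) (x₂ := j' + 1) ⟨by omega, by omega⟩
    ⟨by omega, by omega⟩ (by rw [← hsI j hj.1 (by omega), ← hsI j' hj'.1 (by omega), hjj'])
  omega

theorem apply_add_one_sub_apply (h : IsRunStarts a n γ I)
    (hbin : ∀ i, 1 ≤ i → i ≤ n → a i = 1 ∨ a i = -1) {s : ℕ → ℕ}
    (hsI : ∀ j, 1 ≤ j → j < γ → s j + 1 = I (j + 1)) {f : ℤ → ℤ}
    (hf1 : ∀ j, 1 ≤ j → j ≤ γ - 1 → f (s j) = (-1) ^ j)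
    (hf0 : ∀ x : ℤ, (∀ j, 1 ≤ j → j ≤ γ - 1 → x ≠ s j) → f x = 0)
    {x : ℕ} (hx1 : 1 ≤ x) (hxn : x < n) : a (x + 1) - a x = 2 * a 1 * f x := by
  by_cases hS : ∃ j, 1 ≤ j ∧ j ≤ γ - 1 ∧ x = s j
  · obtain ⟨j, hj1, hjγ, rfl⟩ := hS
    obtain ⟨i, rfl⟩ : ∃ i, j = i + 1 := ⟨j - 1, by omega⟩
    have hx : s (i + 1) = I (i + 1 + 1) - 1 := by have := hsI (i + 1) hj1 (by omega); omega
    rw [hf1 _ hj1 hjγ, hsI _ hj1 (by omega), hx, h.apply_sub_one_eq (by omega) (by omega),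
      h.apply_add_one_eq_sign hbin _ (by omega), h.apply_add_one_eq_sign hbin _ (by omega),
      pow_succ]
    ring
  · rw [hf0 x fun j hj1 hjγ hx => hS ⟨j, hj1, hjγ, by exact_mod_cast hx⟩,
      h.apply_add_one_eq_of_forall_ne hxn fun j hj1 hjγ hIj => ?_]
    · ring
    rcases Nat.lt_or_ge 1 j with hj | hj
    · obtain ⟨i, rfl⟩ : ∃ i, j = i + 1 := ⟨j - 1, by omega⟩
      exact hS ⟨i, by omega, by omega, by have := hsI i (by omega) (by omega); omega⟩
    · rw [show j = 1 by omega, h.first] at hIj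
      omega

end IsRunStarts

theorem sum_range_mul_shift_eq_of_interior (d : ℕ → ℤ) (f : ℤ → ℤ) (c ε : ℤ) (hc : c * c = 1)
    {m k : ℕ} (hk : 1 ≤ k) (hd0 : d 0 = c) (hd : ∀ x, 1 ≤ x → x < m + k + 1 → d x = 2 * c * f x)
    (hdn : d (m + k + 1) = c * ε) :
    ∑ x ∈ range (m + 2), d x * d (x + k)
      = 2 * (f k + ε * f (m + 1) + 2 * ∑ x ∈ range m, f (x + 1) * f (x + 1 + k)) := by
  rw [sum_range_succ, sum_range_succ', show m + 1 + k = m + k + 1 by omega, hdn, hd0,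
    hd (m + 1) (by omega) (by omega), zero_add, hd k hk (by omega)]
  have hmid : ∀ x ∈ range m, d (x + 1) * d (x + 1 + k)
      = 4 * (f (x + 1) * f (x + 1 + k)) := fun x hx => by
    rw [mem_range] at hx
    rw [hd _ (by omega) (by omega), hd _ (by omega) (by omega)]
    push_cast
    linear_combination 4 * f (x + 1) * f (x + 1 + k) * hc
  rw [sum_congr rfl hmid, ← mul_sum]
  push_cast
  linear_combination (2 * f k + 2 * ε * f (m + 1)) * hc

theorem sum_range_mul_shift_eq_sum_of_support {J : Finset ℕ} (s : ℕ → ℕ) (σ : ℕ → ℤ)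
    (f : ℤ → ℤ) {m k : ℕ} (hs : Set.InjOn s J) (hsm : ∀ j ∈ J, s j ≤ m + k) (hs1 : ∀ j ∈ J, 1 ≤ s j)
    (hf1 : ∀ j ∈ J, f (s j) = σ j) (hf0 : ∀ x : ℤ, (∀ j ∈ J, x ≠ s j) → f x = 0) :
    ∑ x ∈ range m, f (x + 1) * f (x + 1 + k) = ∑ j ∈ J, σ j * f (s j - k) := by
  have hsupp : ∀ x : ℤ, f x ≠ 0 → ∃ j ∈ J, x = s j := fun x hx => by
    by_contra! h
    exact hx (hf0 x h)
  have hlarge : ∀ j ∈ J, σ j * f (s j - k) ≠ 0 → k + 1 ≤ s j := fun j hj hne => by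
    obtain ⟨j', hj', hx⟩ := hsupp _ (right_ne_zero_of_mul hne)
    have := hs1 j' hj'
    omega
  symm
  refine sum_bij_ne_zero (fun j _ _ => s j - k - 1) (fun j hj hne => ?_)
    (fun j hj hne j' hj' hne' heq => hs hj hj' ?_) (fun x hx hne => ?_) (fun j hj hne => ?_)
  · have := hsm j hj
    have := hlarge j hj hne
    rw [mem_range]
    omega
  · have := hlarge j hj hne
    have := hlarge j' hj' hne'
    omega
  · obtain ⟨j, hj, hx'⟩ := hsupp _ (right_ne_zero_of_mul hne)
    have hxj : s j - k - 1 = x := by omega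
    refine ⟨j, hj, ?_, hxj⟩
    rw [← hf1 j hj, ← hx', show (x : ℤ) + 1 + k - k = x + 1 by ring, mul_comm]
    exact hne
  · have := hlarge j hj hne
    rw [show ((s j - k - 1 : ℕ) : ℤ) + 1 = s j - k by omega,
      sub_add_cancel, hf1 j hj, mul_comm]

theorem stmt_11_general (n γ : ℕ) (a : ℕ → ℤ)
    (hbin : ∀ i, 1 ≤ i → i ≤ n → a i = 1 ∨ a i = -1)
    (h0 : a 0 = 0) (htop : a (n + 1) = 0)
    -- `I j` (for `1 ≤ j ≤ γ+1`) are the starting positions of the runs of `a`: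
    (I : ℕ → ℕ) (hI1 : I 1 = 1) (hIlast : I (γ + 1) = n + 1)
    (hImono : ∀ j, 1 ≤ j → j ≤ γ → I j < I (j + 1))
    (hchange : ∀ j, 2 ≤ j → j ≤ γ → a (I j - 1) ≠ a (I j))
    (hconst : ∀ j, 1 ≤ j → j ≤ γ → ∀ p, I j ≤ p → p < I (j + 1) → a p = a (I j))
    -- the run length encoding `r` and the partial sums `s`:
    (r : ℕ → ℕ) (hr : ∀ j, 1 ≤ j → j ≤ γ → r j = I (j + 1) - I j)
    (s : ℕ → ℕ) (hs : ∀ j, 1 ≤ j → j ≤ γ → s j = ∑ t ∈ Finset.Icc 1 j, r t)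
    -- the function `f_S`:
    (fS : ℤ → ℤ)
    (hfS1 : ∀ j, 1 ≤ j → j ≤ γ - 1 → fS ((s j : ℤ)) = (-1) ^ j)
    (hfS0 : ∀ x : ℤ, (∀ j, 1 ≤ j → j ≤ γ - 1 → x ≠ (s j : ℤ)) → fS x = 0)
    (k : ℕ) (hk1 : 1 ≤ k) (hk2 : k ≤ n - 1) :
    runVec a n k = fS (k : ℤ) + (-1) ^ γ * fS ((n : ℤ) - (k : ℤ))
      + 2 * ∑ j ∈ Finset.Icc 1 (γ - 1), (-1 : ℤ) ^ j * fS ((s j : ℤ) - (k : ℤ)) := by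
  have hI : IsRunStarts a n γ I := ⟨hI1, hIlast, hImono, hchange, hconst⟩
  have hsI : ∀ j, 1 ≤ j → j < γ → s j + 1 = I (j + 1) := fun j hj hjγ => by
    rw [hs j hj hjγ.le,
      sum_congr rfl fun t ht => hr t (mem_Icc.1 ht).1 ((mem_Icc.1 ht).2.trans hjγ.le),
      hI.sum_Icc_sub_add_one j hjγ.le]
  have ha1 : a 1 * a 1 = 1 := by rcases hbin 1 le_rfl (by omega) with h | h <;> rw [h] <;> norm_num
  obtain ⟨m, rfl⟩ : ∃ m, n = m + k + 1 := ⟨n - k - 1, by omega⟩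
  have hautocorr := sum_range_mul_shift_eq_of_interior (fun x => a (x + 1) - a x) fS (a 1)
    ((-1) ^ γ) ha1 hk1 (by simp only [h0, zero_add, sub_zero])
    (fun x hx1 hx => hI.apply_add_one_sub_apply hbin hsI hfS1 hfS0 hx1 hx)
    (hI.apply_add_one_sub_apply_last hbin htop (hI.pos (by omega)))
  have hshift := sum_range_mul_shift_eq_sum_of_support (m := m) (k := k) s (fun j => (-1) ^ j) fS
    (hI.injOn_of_add_one_eq hsI) (fun j hj => by have := hI.add_one_mem_Icc hsI hj; omega)
    (fun j hj => (hI.add_one_mem_Icc hsI hj).1)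
    (fun j hj => hfS1 j (mem_Icc.1 hj).1 (mem_Icc.1 hj).2)
    (fun x hx => hfS0 x fun j hj hjγ => hx j (mem_Icc.2 ⟨hj, hjγ⟩))
  have hrun := two_mul_runVec_eq_sum_mul_sub a _ k hbin h0 htop hk1 (by omega)
  rw [show m + k + 1 + 1 - k = m + 2 by omega, hautocorr, hshift] at hrun
  rw [show ((m + k + 1 : ℕ) : ℤ) - k = m + 1 by push_cast; ring]
  linarith

theorem stmt_11 (n γ : ℕ) (hn : 1 ≤ n) (a : ℕ → ℤ)
    (hbin : ∀ i, 1 ≤ i → i ≤ n → a i = 1 ∨ a i = -1)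
    (h0 : a 0 = 0) (htop : a (n + 1) = 0)
    -- `I j` (for `1 ≤ j ≤ γ+1`) are the starting positions of the runs of `a`:
    (I : ℕ → ℕ) (hI1 : I 1 = 1) (hIlast : I (γ + 1) = n + 1)
    (hImono : ∀ j, 1 ≤ j → j ≤ γ → I j < I (j + 1))
    (hchange : ∀ j, 2 ≤ j → j ≤ γ → a (I j - 1) ≠ a (I j))
    (hconst : ∀ j, 1 ≤ j → j ≤ γ → ∀ p, I j ≤ p → p < I (j + 1) → a p = a (I j))
    -- the run length encoding `r` and the partial sums `s`:
    (r : ℕ → ℕ) (hr : ∀ j, 1 ≤ j → j ≤ γ → r j = I (j + 1) - I j)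
    (s : ℕ → ℕ) (hs : ∀ j, 1 ≤ j → j ≤ γ → s j = ∑ t ∈ Finset.Icc 1 j, r t)
    -- the function `f_S`:
    (fS : ℤ → ℤ)
    (hfS1 : ∀ j, 1 ≤ j → j ≤ γ - 1 → fS ((s j : ℤ)) = (-1) ^ j)
    (hfS0 : ∀ x : ℤ, (∀ j, 1 ≤ j → j ≤ γ - 1 → x ≠ (s j : ℤ)) → fS x = 0)
    (k : ℕ) (hk1 : 1 ≤ k) (hk2 : k ≤ n - 1) :
    runVec a n k = fS (k : ℤ) + (-1) ^ γ * fS ((n : ℤ) - (k : ℤ))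
      + 2 * ∑ j ∈ Finset.Icc 1 (γ - 1), (-1 : ℤ) ^ j * fS ((s j : ℤ) - (k : ℤ)) :=
  stmt_11_general n γ a hbin h0 htop I hI1 hIlast hImono hchange hconst r hr s hs fS hfS1 hfS0 k hk1
    hk2
end

section
/- Let a be a binary sequence of length n with γ runs and run length encoding r = (r_1,…,r_γ). Then for every k with 1 ≤ k ≤ n−1, Σ_{j=1}^{γ−1} (−1)^j·f_S(s_j − k) = Σ_{j=1}^{γ−1} (−1)^j·f_S(s_j + k) = Σ_{i=1}^{n−1} f_S(i+k)·f_S(i). -/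
/-! The first equality is the symmetry `c(-k) = c(k)` of the autocorrelation `c` of `f_S`, and the
second one reads `c(k)` off at the points of `S`. Indeed, since the partial sums `s_j` are distinct
and lie in `[1, n-1]`, both `∑ⱼ (-1)^j g(s_j) = ∑ⱼ f_S(s_j) g(s_j)` and `∑ᵢ f_S(i) g(i)` equal the
full sum `∑ₓ f_S(x) g(x)` over `ℤ`. -/

open Finset Function

theorem finsum_eq_sum_comp_of_support_subset_image {α β M : Type*} [AddCommMonoid M]
    {h : β → M} {e : α → β} {J : Finset α} (he : Set.InjOn e J) (hh : support h ⊆ e '' J) :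
    ∑ᶠ x, h x = ∑ j ∈ J, h (e j) := by
  classical
  rw [finsum_eq_sum_of_support_subset h (s := J.image e) (by simpa using hh), sum_image he]

theorem sum_mul_comp_eq_finsum_mul {α β R : Type*} [CommSemiring R] {f g : β → R} {c : α → R}
    {e : α → β} {J : Finset α} (he : Set.InjOn e J) (hf : support f ⊆ e '' J)
    (hfe : ∀ j ∈ J, f (e j) = c j) :
    ∑ j ∈ J, c j * g (e j) = ∑ᶠ x, f x * g x := by
  rw [finsum_eq_sum_comp_of_support_subset_image he ((support_mul_subset_left _ _).trans hf)]
  exact sum_congr rfl fun j hj => by rw [hfe j hj]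

theorem finsum_mul_sub_eq_finsum_mul_add {G R : Type*} [AddCommGroup G] [CommSemiring R]
    (f : G → R) (k : G) : ∑ᶠ x, f x * f (x - k) = ∑ᶠ x, f x * f (x + k) := by
  rw [← finsum_comp_equiv (Equiv.addRight k)]
  simp only [Equiv.coe_addRight, add_sub_cancel_right, mul_comm]

theorem sum_Icc_sub_add_eq {I : ℕ → ℕ} {m : ℕ} (hI : ∀ t, 1 ≤ t → t ≤ m → I t ≤ I (t + 1)) :
    ∑ t ∈ Icc 1 m, (I (t + 1) - I t) + I 1 = I (m + 1) := by
  induction m with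
  | zero => simp
  | succ m ih =>
    rw [sum_Icc_succ_top (by omega)]
    have := ih fun t ht htm => hI t ht (by omega)
    have := hI (m + 1) (by omega) le_rfl
    omega

section RunLengthEncoding

variable {n γ : ℕ} {I r s : ℕ → ℕ}

theorem partialSum_add_one_eq (hI1 : I 1 = 1) (hImono : ∀ j, 1 ≤ j → j ≤ γ → I j < I (j + 1))
    (hr : ∀ j, 1 ≤ j → j ≤ γ → r j = I (j + 1) - I j)
    (hs : ∀ j, 1 ≤ j → j ≤ γ → s j = ∑ t ∈ Icc 1 j, r t) {j : ℕ} (hj1 : 1 ≤ j) (hjγ : j ≤ γ) :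
    s j + 1 = I (j + 1) := by
  have htel := sum_Icc_sub_add_eq (m := j) fun t ht _ => (hImono t ht (by omega)).le
  rw [hs j hj1 hjγ, sum_congr rfl fun t ht => hr t (mem_Icc.1 ht).1 (by
    have := (mem_Icc.1 ht).2; omega)]
  omega

theorem strictMonoOn_partialSum (hImono : ∀ j, 1 ≤ j → j ≤ γ → I j < I (j + 1))
    (hsI : ∀ j, 1 ≤ j → j ≤ γ → s j + 1 = I (j + 1)) : StrictMonoOn s (Set.Icc 1 γ) :=
  strictMonoOn_of_lt_add_one Set.ordConnected_Icc fun j _ hj hj1 => by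
    have := hsI j hj.1 (by have := hj.2; omega)
    have := hsI (j + 1) (by omega) hj1.2
    have := hImono (j + 1) (by omega) hj1.2
    omega

theorem partialSum_mem_Icc (hI1 : I 1 = 1) (hIlast : I (γ + 1) = n + 1)
    (hImono : ∀ j, 1 ≤ j → j ≤ γ → I j < I (j + 1))
    (hsI : ∀ j, 1 ≤ j → j ≤ γ → s j + 1 = I (j + 1)) {j : ℕ} (hj1 : 1 ≤ j) (hjγ : j < γ) :
    s j ∈ Icc 1 (n - 1) := by
  have hmono := strictMonoOn_partialSum hImono hsI
  have h1 : s 1 ≤ s j := hmono.monotoneOn ⟨le_rfl, by omega⟩ ⟨hj1, hjγ.le⟩ hj1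
  have hγ : s j < s γ := hmono ⟨hj1, hjγ.le⟩ ⟨by omega, le_rfl⟩ hjγ
  have := hsI 1 le_rfl (by omega)
  have := hsI γ (by omega) le_rfl
  have := hImono 1 le_rfl (by omega)
  rw [mem_Icc]
  omega

end RunLengthEncoding

theorem stmt_12_general (n γ : ℕ)
    -- `I j` (for `1 ≤ j ≤ γ+1`) are the starting positions of the runs of `a`:
    (I : ℕ → ℕ) (hI1 : I 1 = 1) (hIlast : I (γ + 1) = n + 1)
    (hImono : ∀ j, 1 ≤ j → j ≤ γ → I j < I (j + 1))
    -- the run length encoding `r` and the partial sums `s`: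
    (r : ℕ → ℕ) (hr : ∀ j, 1 ≤ j → j ≤ γ → r j = I (j + 1) - I j)
    (s : ℕ → ℕ) (hs : ∀ j, 1 ≤ j → j ≤ γ → s j = ∑ t ∈ Finset.Icc 1 j, r t)
    -- the function `f_S`:
    (fS : ℤ → ℤ)
    (hfS1 : ∀ j, 1 ≤ j → j ≤ γ - 1 → fS ((s j : ℤ)) = (-1) ^ j)
    (hfS0 : ∀ x : ℤ, (∀ j, 1 ≤ j → j ≤ γ - 1 → x ≠ (s j : ℤ)) → fS x = 0)
    (k : ℕ) :
    (∑ j ∈ Finset.Icc 1 (γ - 1), (-1 : ℤ) ^ j * fS ((s j : ℤ) - (k : ℤ))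
      = ∑ j ∈ Finset.Icc 1 (γ - 1), (-1 : ℤ) ^ j * fS ((s j : ℤ) + (k : ℤ))) ∧
    (∑ j ∈ Finset.Icc 1 (γ - 1), (-1 : ℤ) ^ j * fS ((s j : ℤ) + (k : ℤ))
      = ∑ i ∈ Finset.Icc 1 (n - 1), fS ((i : ℤ) + (k : ℤ)) * fS (i : ℤ)) := by
  have hsI j (hj1 : 1 ≤ j) (hjγ : j ≤ γ) := partialSum_add_one_eq hI1 hImono hr hs hj1 hjγ
  have hs_inj : Set.InjOn (fun j => (s j : ℤ)) (Icc 1 (γ - 1)) := fun i hi j hj hij => by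
    simp only [coe_Icc, Set.mem_Icc] at hi hj
    exact (strictMonoOn_partialSum hImono hsI).injOn ⟨hi.1, by omega⟩ ⟨hj.1, by omega⟩
      (by simpa using hij)
  have hsupp : support fS ⊆ (fun j => (s j : ℤ)) '' Icc 1 (γ - 1) := fun x hx => by
    by_contra hxS
    exact hx (hfS0 x fun j hj1 hj2 hxj => hxS ⟨j, by simp [hj1, hj2], hxj.symm⟩)
  have hsupp' : support fS ⊆ (Nat.cast : ℕ → ℤ) '' Icc 1 (n - 1) := fun x hx => by
    obtain ⟨j, hj, rfl⟩ := hsupp hx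
    simp only [coe_Icc, Set.mem_Icc] at hj
    exact ⟨s j, partialSum_mem_Icc hI1 hIlast hImono hsI hj.1 (by omega), rfl⟩
  have sum_sign_eq (g : ℤ → ℤ) :
      ∑ j ∈ Icc 1 (γ - 1), (-1 : ℤ) ^ j * g (s j) = ∑ᶠ x, fS x * g x :=
    sum_mul_comp_eq_finsum_mul hs_inj hsupp fun j hj => hfS1 j (mem_Icc.1 hj).1 (mem_Icc.1 hj).2
  refine ⟨?_, ?_⟩
  · rw [sum_sign_eq (fun x => fS (x - k)), sum_sign_eq (fun x => fS (x + k))]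
    exact finsum_mul_sub_eq_finsum_mul_add fS k
  · rw [sum_sign_eq (fun x => fS (x + k)),
      ← sum_mul_comp_eq_finsum_mul Nat.cast_injective.injOn hsupp' fun _ _ => rfl]
    simp only [mul_comm]

theorem stmt_12 (n γ : ℕ) (hn : 1 ≤ n) (a : ℕ → ℤ)
    (hbin : ∀ i, 1 ≤ i → i ≤ n → a i = 1 ∨ a i = -1)
    (h0 : a 0 = 0)
    -- `I j` (for `1 ≤ j ≤ γ+1`) are the starting positions of the runs of `a`:
    (I : ℕ → ℕ) (hI1 : I 1 = 1) (hIlast : I (γ + 1) = n + 1)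
    (hImono : ∀ j, 1 ≤ j → j ≤ γ → I j < I (j + 1))
    (hchange : ∀ j, 2 ≤ j → j ≤ γ → a (I j - 1) ≠ a (I j))
    (hconst : ∀ j, 1 ≤ j → j ≤ γ → ∀ p, I j ≤ p → p < I (j + 1) → a p = a (I j))
    -- the run length encoding `r` and the partial sums `s`:
    (r : ℕ → ℕ) (hr : ∀ j, 1 ≤ j → j ≤ γ → r j = I (j + 1) - I j)
    (s : ℕ → ℕ) (hs : ∀ j, 1 ≤ j → j ≤ γ → s j = ∑ t ∈ Finset.Icc 1 j, r t)
    -- the function `f_S`: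
    (fS : ℤ → ℤ)
    (hfS1 : ∀ j, 1 ≤ j → j ≤ γ - 1 → fS ((s j : ℤ)) = (-1) ^ j)
    (hfS0 : ∀ x : ℤ, (∀ j, 1 ≤ j → j ≤ γ - 1 → x ≠ (s j : ℤ)) → fS x = 0)
    (k : ℕ) (hk1 : 1 ≤ k) (hk2 : k ≤ n - 1) :
    (∑ j ∈ Finset.Icc 1 (γ - 1), (-1 : ℤ) ^ j * fS ((s j : ℤ) - (k : ℤ))
      = ∑ j ∈ Finset.Icc 1 (γ - 1), (-1 : ℤ) ^ j * fS ((s j : ℤ) + (k : ℤ))) ∧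
    (∑ j ∈ Finset.Icc 1 (γ - 1), (-1 : ℤ) ^ j * fS ((s j : ℤ) + (k : ℤ))
      = ∑ i ∈ Finset.Icc 1 (n - 1), fS ((i : ℤ) + (k : ℤ)) * fS (i : ℤ)) :=
  stmt_12_general n γ I hI1 hIlast hImono r hr s hs fS hfS1 hfS0 k
end

section
/- Let a be a binary sequence of length n which is not constant and satisfies a_1 ≠ a_n. Then for every k with 1 ≤ k ≤ n−1, C̃_{k+1}(a) − 2·C̃_k(a) + C̃_{k−1}(a) = −4·R̃_k(a). -/
/-- The `k`-th periodic autocorrelation of the sequence `a` of length `n`: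
`C̃_k(a) = ∑_{i=1}^{n} a_i a_{i+k}`, where `a` is extended periodically
(so `C̃_n(a) = n` for a binary sequence). -/
def perCorr (a : ℕ → ℤ) (n k : ℕ) : ℤ :=
  ∑ i ∈ Finset.Icc 1 n, a i * a ((i + k - 1) % n + 1)

/-- The length of the p-substring `r(i,j)` of a run length encoding with `γ` runs. -/
def plen (γ i j : ℕ) : ℕ := if i < j then j - i else γ + j - i

/-- The sum of the entries of the p-substring `r(i,j)`. -/
def psum (r : ℕ → ℕ) (γ i j : ℕ) : ℕ :=
  if i < j then ∑ u ∈ Finset.Icc i (j - 1), r u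
  else (∑ u ∈ Finset.Icc i γ, r u) + ∑ u ∈ Finset.Icc 1 (j - 1), r u

/-- The `k`-th component of the periodic run vector: the sum of `(-1)^{|u|}` over
all p-substrings `u = r(i,j)` (`1 ≤ i,j ≤ γ`, `i ≠ j`) of `r` with sum `k`. -/
def runVecPer (r : ℕ → ℕ) (γ k : ℕ) : ℤ :=
  ∑ p ∈ (Finset.Icc 1 γ ×ˢ Finset.Icc 1 γ).filter
      (fun p => p.1 ≠ p.2 ∧ psum r γ p.1 p.2 = k),
    (-1 : ℤ) ^ plen γ p.1 p.2

/-!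
On `ZMod n` the second difference of the periodic autocorrelation of `a` equals
`-∑ₓ Δa(x) Δa(x + k)` for the forward difference `Δa(x) = a(x + 1) - a(x)`. Only the `γ` run
boundaries contribute: just before the start `I p` of the `p`-th run, `Δa = 2 a(I p)`, and these
values alternate in sign, so two boundaries at cyclic distance `k` contribute `4 (-1)^(p + q)`.
The boundaries before runs `p` and `q` are at distance `k` exactly when the p-substring `r(p,q)`
has sum `k`, and as `γ` is even, `(-1)^(p + q) = (-1)^|r(p,q)|`.
-/

open Finset
open scoped fwdDiff

def autocorr {G R : Type*} [AddCommGroup G] [Fintype G] [NonUnitalNonAssocSemiring R]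
    (f : G → R) (t : G) : R :=
  ∑ x, f x * f (x + t)

theorem autocorr_add_sub_two_mul_add_autocorr_sub {G R : Type*} [AddCommGroup G] [Fintype G]
    [CommRing R] (f : G → R) (s t : G) :
    autocorr f (t + s) - 2 * autocorr f t + autocorr f (t - s) = -autocorr (Δ_[s] f) t := by
  have shift : ∀ u v, v = u + s → ∑ x, f (x + s) * f (x + v) = autocorr f u := fun u v huv =>
    Fintype.sum_equiv (Equiv.addRight s) _ _ fun x => by
      simp only [Equiv.coe_addRight, huv, add_assoc, add_comm s u]
  simp only [autocorr, fwdDiff, sub_mul, mul_sub, sum_sub_distrib, add_assoc]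
  rw [shift t (t + s) rfl, shift (t - s) t (sub_add_cancel t s).symm]
  simp only [autocorr]
  ring

theorem autocorr_eq_sum_sum_of_support_subset {G R ι : Type*} [AddCommGroup G] [Fintype G]
    [DecidableEq G] [NonUnitalNonAssocSemiring R] {f : G → R} {s : Finset ι} {ε : ι → G}
    (hε : Set.InjOn ε s) (hf : ∀ x, f x ≠ 0 → ∃ i ∈ s, ε i = x) (t : G) :
    autocorr f t = ∑ i ∈ s, ∑ j ∈ s, if ε j = ε i + t then f (ε i) * f (ε j) else 0 := by
  have hf' : ∀ x, x ∉ s.image ε → f x = 0 := fun x hx => by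
    by_contra h
    obtain ⟨i, hi, rfl⟩ := hf x h
    exact hx (mem_image_of_mem ε hi)
  have expand : ∀ y, f y = ∑ j ∈ s, if ε j = y then f (ε j) else 0 := fun y => by
    rw [← sum_image (f := fun x => if x = y then f x else 0) hε, sum_ite_eq']
    split_ifs with h
    · rfl
    · exact hf' y h
  rw [autocorr, ← sum_subset (subset_univ (s.image ε)) fun x _ hx => by rw [hf' x hx, zero_mul],
    sum_image hε]
  refine sum_congr rfl fun i _ => ?_
  rw [expand (ε i + t), mul_sum]
  refine sum_congr rfl fun j _ => ?_
  split_ifs <;> simp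

section OnZMod

variable {n : ℕ}

/-- Position `i ∈ [1, n]` of a sequence of length `n` sits at the residue of `i`, so position `n`
sits at `0`. -/
def onZMod (a : ℕ → ℤ) (n : ℕ) (x : ZMod n) : ℤ := a ((x - 1).val + 1)

theorem val_natCast_sub_one_add_one {m : ℕ} (h1 : 1 ≤ m) (h : m ≤ n) :
    ((m : ZMod n) - 1).val + 1 = m := by
  rw [← Nat.cast_pred h1, ZMod.val_natCast, Nat.mod_eq_of_lt (by omega)]
  omega

theorem onZMod_natCast (a : ℕ → ℤ) {m : ℕ} (h1 : 1 ≤ m) (h : m ≤ n) :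
    onZMod a n m = a m := by
  rw [onZMod, val_natCast_sub_one_add_one h1 h]

theorem onZMod_natCast_sub_one (a : ℕ → ℤ) {m : ℕ} (h1 : 1 ≤ m) (h : m ≤ n) :
    onZMod a n ((m : ZMod n) - 1) = a (if m = 1 then n else m - 1) := by
  split_ifs with hm
  · rw [hm, Nat.cast_one, sub_self, ← ZMod.natCast_self, onZMod_natCast a (by omega) le_rfl]
  · rw [← Nat.cast_pred h1, onZMod_natCast a (by omega) (by omega)]

variable [NeZero n]

theorem sum_Icc_natCast {M : Type*} [AddCommMonoid M] (g : ZMod n → M) :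
    ∑ i ∈ Icc 1 n, g i = ∑ x, g x :=
  sum_nbij' (fun i => i) (fun x => (x - 1).val + 1) (by simp)
    (fun x _ => by simpa using (ZMod.val_lt (x - 1)))
    (fun i hi => by simpa using (val_natCast_sub_one_add_one (mem_Icc.1 hi).1 (mem_Icc.1 hi).2))
    (fun x _ => by simp) (fun _ _ => rfl)

theorem perCorr_eq_autocorr (a : ℕ → ℤ) (k : ℕ) : perCorr a n k = autocorr (onZMod a n) k := by
  rw [perCorr, autocorr, ← sum_Icc_natCast]
  refine sum_congr rfl fun i hi => ?_
  obtain ⟨hi1, hin⟩ := mem_Icc.1 hi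
  have hcast : ((i + k - 1 : ℕ) : ZMod n) = i + k - 1 := by
    push_cast [Nat.cast_sub (by omega : 1 ≤ i + k)]; rfl
  rw [onZMod_natCast a hi1 hin, onZMod, ← hcast, ZMod.val_natCast]

end OnZMod

theorem eq_neg_of_ne_of_sign {x y : ℤ} (hx : x = 1 ∨ x = -1) (hy : y = 1 ∨ y = -1) (h : x ≠ y) :
    y = -x := by
  rcases hx with rfl | rfl <;> rcases hy with rfl | rfl <;> omega

theorem neg_one_pow_plen {γ p q : ℕ} (hγ : Even γ) (hp : p ≤ γ) :
    (-1 : ℤ) ^ plen γ p q = (-1) ^ (p + q) := by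
  obtain ⟨m, rfl⟩ := hγ
  rw [neg_one_pow_eq_pow_mod_two, neg_one_pow_eq_pow_mod_two (p + q), plen]
  split_ifs <;> congr 1 <;> omega

structure IsRunDecomposition (a : ℕ → ℤ) (n γ : ℕ) (I : ℕ → ℕ) : Prop where
  first : I 1 = 1
  last : I (γ + 1) = n + 1
  lt_succ : ∀ j, 1 ≤ j → j ≤ γ → I j < I (j + 1)
  ne_pred : ∀ j, 2 ≤ j → j ≤ γ → a (I j - 1) ≠ a (I j)
  const : ∀ j, 1 ≤ j → j ≤ γ → ∀ p, I j ≤ p → p < I (j + 1) → a p = a (I j)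

namespace IsRunDecomposition

variable {a : ℕ → ℤ} {n γ : ℕ} {I : ℕ → ℕ}

theorem strictMonoOn (h : IsRunDecomposition a n γ I) : StrictMonoOn I (Set.Icc 1 (γ + 1)) :=
  strictMonoOn_of_lt_add_one Set.ordConnected_Icc fun j _ hj hj1 =>
    h.lt_succ j hj.1 (by simp only [Set.mem_Icc] at hj1; omega)

theorem lt_of_lt (h : IsRunDecomposition a n γ I) {p q : ℕ} (hp : 1 ≤ p) (hpq : p < q)
    (hq : q ≤ γ + 1) : I p < I q :=
  h.strictMonoOn ⟨hp, by omega⟩ ⟨by omega, hq⟩ hpq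

theorem apply_mem_Icc (h : IsRunDecomposition a n γ I) {p : ℕ} (hp : 1 ≤ p) (hpγ : p ≤ γ) :
    I p ∈ Set.Icc 1 n := by
  have h1 := h.strictMonoOn.monotoneOn ⟨le_rfl, by omega⟩ ⟨hp, by omega⟩ hp
  have h2 := h.lt_of_lt hp (Nat.lt_succ_of_le hpγ) le_rfl
  rw [h.first] at h1
  rw [h.last] at h2
  exact ⟨h1, by omega⟩

theorem exists_run (h : IsRunDecomposition a n γ I) {x : ℕ} (hx1 : 1 ≤ x) (hxn : x ≤ n) :
    ∃ j, 1 ≤ j ∧ j ≤ γ ∧ I j ≤ x ∧ x < I (j + 1) := by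
  by_contra! hnot
  have hle : ∀ j, 1 ≤ j → j ≤ γ + 1 → I j ≤ x := by
    intro j hj
    induction j, hj using Nat.le_induction with
    | base => exact fun _ => h.first.symm ▸ hx1
    | succ j hj ih => exact fun hjγ => hnot j hj (by omega) (ih (by omega))
  have := hle (γ + 1) (by omega) le_rfl
  rw [h.last] at this
  omega

theorem apply_succ (h : IsRunDecomposition a n γ I)
    (hbin : ∀ i, 1 ≤ i → i ≤ n → a i = 1 ∨ a i = -1) {j : ℕ} (hj : 1 ≤ j) (hjγ : j + 1 ≤ γ) :
    a (I (j + 1)) = -a (I j) := by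
  have hlt := h.lt_succ j hj (by omega)
  obtain ⟨hIj₁, hIj₂⟩ := h.apply_mem_Icc hj (by omega)
  obtain ⟨hIs₁, hIs₂⟩ := h.apply_mem_Icc (by omega : 1 ≤ j + 1) hjγ
  have hprev := h.const j hj (by omega) (I (j + 1) - 1) (by omega) (by omega)
  exact eq_neg_of_ne_of_sign (hbin _ hIj₁ hIj₂) (hbin _ hIs₁ hIs₂)
    (hprev ▸ h.ne_pred (j + 1) (by omega) hjγ)

theorem apply_eq (h : IsRunDecomposition a n γ I)
    (hbin : ∀ i, 1 ≤ i → i ≤ n → a i = 1 ∨ a i = -1) {j : ℕ} (hj : 1 ≤ j) (hjγ : j ≤ γ) :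
    a (I j) = (-1) ^ (j + 1) * a 1 := by
  induction j, hj using Nat.le_induction with
  | base => rw [h.first]; ring
  | succ j hj ih => rw [h.apply_succ hbin hj hjγ, ih (by omega)]; ring

theorem even (h : IsRunDecomposition a n γ I)
    (hbin : ∀ i, 1 ≤ i → i ≤ n → a i = 1 ∨ a i = -1) (h1n : a 1 ≠ a n) : Even γ := by
  rcases Nat.eq_zero_or_pos γ with hγ | hγ
  · exact hγ ▸ .zero
  obtain ⟨hIγ₁, hIγ₂⟩ := h.apply_mem_Icc hγ le_rfl
  have han := h.const γ hγ le_rfl n hIγ₂ (by rw [h.last]; omega)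
  by_contra hodd
  rw [h.apply_eq hbin hγ le_rfl, (Nat.not_even_iff_odd.1 hodd).add_one.neg_one_pow, one_mul] at han
  exact h1n han.symm

theorem add_sum_Icc (h : IsRunDecomposition a n γ I) {r : ℕ → ℕ}
    (hr : ∀ j, 1 ≤ j → j ≤ γ → r j = I (j + 1) - I j) {p q : ℕ} (hp : 1 ≤ p) (hpq : p ≤ q)
    (hq : q ≤ γ + 1) : I p + ∑ u ∈ Icc p (q - 1), r u = I q := by
  induction q, hpq using Nat.le_induction with
  | base => rw [Icc_eq_empty (by omega), sum_empty, add_zero]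
  | succ q hpq ih =>
    obtain ⟨q, rfl⟩ : ∃ q', q = q' + 1 := ⟨q - 1, by omega⟩
    have ih' := ih (by omega)
    rw [add_tsub_cancel_right] at ih' ⊢
    rw [sum_Icc_succ_top (by omega), ← add_assoc, ih', hr (q + 1) (by omega) (by omega)]
    have := h.lt_succ (q + 1) (by omega) (by omega)
    omega

theorem add_psum (h : IsRunDecomposition a n γ I) {r : ℕ → ℕ}
    (hr : ∀ j, 1 ≤ j → j ≤ γ → r j = I (j + 1) - I j) {p q : ℕ} (hp : 1 ≤ p) (hpγ : p ≤ γ)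
    (hq : 1 ≤ q) (hqγ : q ≤ γ) : I p + psum r γ p q = I q + if p < q then 0 else n := by
  rw [psum]
  split_ifs with hpq
  · exact h.add_sum_Icc hr hp hpq.le (by omega)
  · have htail := h.add_sum_Icc hr hp (by omega : p ≤ γ + 1) le_rfl
    have hhead := h.add_sum_Icc hr le_rfl hq (by omega)
    rw [add_tsub_cancel_right, h.last] at htail
    rw [h.first] at hhead
    omega

theorem natCast_sub_one_eq_add_iff [NeZero n] (h : IsRunDecomposition a n γ I) {r : ℕ → ℕ}
    (hr : ∀ j, 1 ≤ j → j ≤ γ → r j = I (j + 1) - I j) {p q k : ℕ} (hp : 1 ≤ p) (hpγ : p ≤ γ)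
    (hq : 1 ≤ q) (hqγ : q ≤ γ) (hk1 : 1 ≤ k) (hkn : k < n) :
    (I q : ZMod n) - 1 = (I p : ZMod n) - 1 + k ↔ p ≠ q ∧ psum r γ p q = k := by
  have hsum := h.add_psum hr hp hpγ hq hqγ
  obtain ⟨hIp₁, hIp₂⟩ := h.apply_mem_Icc hp hpγ
  obtain ⟨hIq₁, hIq₂⟩ := h.apply_mem_Icc hq hqγ
  have hcast : (I q : ZMod n) = I p + psum r γ p q := by
    have := congrArg (Nat.cast : ℕ → ZMod n) hsum
    split_ifs at this <;> simpa using this.symm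
  have hbound : psum r γ p q < n ∨ (p = q ∧ psum r γ p q = n) := by
    rcases lt_trichotomy p q with hpq | rfl | hpq
    · have := h.lt_of_lt hp hpq (by omega)
      rw [if_pos hpq] at hsum
      omega
    · rw [if_neg (lt_irrefl p)] at hsum
      omega
    · have := h.lt_of_lt hq hpq (by omega)
      rw [if_neg (by omega)] at hsum
      omega
  rw [sub_add_eq_add_sub, sub_left_inj, hcast, add_right_inj, ZMod.natCast_eq_natCast_iff',
    Nat.mod_eq_of_lt hkn]
  rcases hbound with hlt | ⟨rfl, hn⟩
  · rw [Nat.mod_eq_of_lt hlt]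
    constructor
    · rintro rfl
      refine ⟨fun hpq => ?_, rfl⟩
      subst hpq
      rw [if_neg (lt_irrefl p)] at hsum
      omega
    · exact And.right
  · rw [hn, Nat.mod_self]
    omega

theorem injOn_natCast_sub_one [NeZero n] (h : IsRunDecomposition a n γ I) :
    Set.InjOn (fun p => (I p : ZMod n) - 1) ↑(Icc 1 γ) := by
  intro p hp q hq hpq
  simp only [coe_Icc, Set.mem_Icc] at hp hq
  obtain ⟨hIp₁, hIp₂⟩ := h.apply_mem_Icc hp.1 hp.2
  obtain ⟨hIq₁, hIq₂⟩ := h.apply_mem_Icc hq.1 hq.2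
  refine h.strictMonoOn.injOn ⟨hp.1, by omega⟩ ⟨hq.1, by omega⟩ ?_
  rw [← val_natCast_sub_one_add_one hIp₁ hIp₂, ← val_natCast_sub_one_add_one hIq₁ hIq₂]
  exact congrArg (fun x : ZMod n => x.val + 1) hpq

theorem fwdDiff_onZMod_natCast_sub_one (h : IsRunDecomposition a n γ I)
    (hbin : ∀ i, 1 ≤ i → i ≤ n → a i = 1 ∨ a i = -1) (h1n : a 1 ≠ a n) {p : ℕ} (hp : 1 ≤ p)
    (hpγ : p ≤ γ) : Δ_[1] (onZMod a n) ((I p : ZMod n) - 1) = 2 * a (I p) := by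
  obtain ⟨hIp₁, hIp₂⟩ := h.apply_mem_Icc hp hpγ
  have hprev : a (if I p = 1 then n else I p - 1) = -a (I p) := by
    split_ifs with hI
    · rw [hI]
      exact eq_neg_of_ne_of_sign (hbin 1 le_rfl (by omega)) (hbin n (by omega) le_rfl) h1n
    · have h2p : 2 ≤ p := by
        by_contra
        obtain rfl : p = 1 := by omega
        exact hI h.first
      exact eq_neg_of_ne_of_sign (hbin _ hIp₁ hIp₂) (hbin _ (by omega) (by omega))
        (h.ne_pred p h2p hpγ).symm
  rw [fwdDiff, sub_add_cancel, onZMod_natCast a hIp₁ hIp₂,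
    onZMod_natCast_sub_one a hIp₁ hIp₂, hprev]
  ring

theorem exists_natCast_sub_one_of_fwdDiff_ne_zero [NeZero n] (h : IsRunDecomposition a n γ I)
    {x : ZMod n} (hx : Δ_[1] (onZMod a n) x ≠ 0) : ∃ p ∈ Icc 1 γ, (I p : ZMod n) - 1 = x := by
  have hmn : x.val + 1 ≤ n := ZMod.val_lt x
  have hxm : x = ((x.val + 1 : ℕ) : ZMod n) - 1 := by simp
  rw [hxm, fwdDiff, sub_add_cancel, onZMod_natCast a (by omega) hmn,
    onZMod_natCast_sub_one a (by omega) hmn] at hx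
  obtain ⟨j, hj1, hjγ, hjm, hmj⟩ := h.exists_run (by omega) hmn
  refine ⟨j, mem_Icc.2 ⟨hj1, hjγ⟩, ?_⟩
  rw [hxm]
  congr 2
  by_contra hIj
  have hIj1 := (h.apply_mem_Icc hj1 hjγ).1
  rw [if_neg (by omega), Nat.add_sub_cancel, h.const j hj1 hjγ _ hjm hmj,
    h.const j hj1 hjγ x.val (by omega) (by omega), sub_self] at hx
  exact hx rfl

theorem fwdDiff_mul_fwdDiff (h : IsRunDecomposition a n γ I)
    (hbin : ∀ i, 1 ≤ i → i ≤ n → a i = 1 ∨ a i = -1) (h1n : a 1 ≠ a n) {p q : ℕ} (hp : 1 ≤ p)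
    (hpγ : p ≤ γ) (hq : 1 ≤ q) (hqγ : q ≤ γ) :
    Δ_[1] (onZMod a n) ((I p : ZMod n) - 1) * Δ_[1] (onZMod a n) ((I q : ZMod n) - 1)
      = 4 * (-1) ^ plen γ p q := by
  obtain ⟨hIp₁, hIp₂⟩ := h.apply_mem_Icc hp hpγ
  have ha1 : a 1 * a 1 = 1 := by
    rcases hbin 1 le_rfl (by omega) with h1 | h1 <;> rw [h1] <;> norm_num
  rw [h.fwdDiff_onZMod_natCast_sub_one hbin h1n hp hpγ,
    h.fwdDiff_onZMod_natCast_sub_one hbin h1n hq hqγ, h.apply_eq hbin hp hpγ,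
    h.apply_eq hbin hq hqγ, neg_one_pow_plen (h.even hbin h1n) hpγ]
  linear_combination (4 * (-1 : ℤ) ^ (p + q)) * ha1

end IsRunDecomposition

theorem stmt_18_general (n γ : ℕ) (a : ℕ → ℤ)
    (hbin : ∀ i, 1 ≤ i → i ≤ n → a i = 1 ∨ a i = -1)
    (h1n : a 1 ≠ a n)
    -- `I j` (for `1 ≤ j ≤ γ+1`) are the starting positions of the runs of `a`:
    (I : ℕ → ℕ) (hI1 : I 1 = 1) (hIlast : I (γ + 1) = n + 1)
    (hImono : ∀ j, 1 ≤ j → j ≤ γ → I j < I (j + 1))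
    (hchange : ∀ j, 2 ≤ j → j ≤ γ → a (I j - 1) ≠ a (I j))
    (hconst : ∀ j, 1 ≤ j → j ≤ γ → ∀ p, I j ≤ p → p < I (j + 1) → a p = a (I j))
    -- the run length encoding `r`:
    (r : ℕ → ℕ) (hr : ∀ j, 1 ≤ j → j ≤ γ → r j = I (j + 1) - I j)
    (k : ℕ) (hk1 : 1 ≤ k) (hk2 : k ≤ n - 1) :
    perCorr a n (k + 1) - 2 * perCorr a n k + perCorr a n (k - 1)
      = -4 * runVecPer r γ k := by
  have : NeZero n := ⟨by omega⟩
  have hrun : IsRunDecomposition a n γ I := ⟨hI1, hIlast, hImono, hchange, hconst⟩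
  rw [perCorr_eq_autocorr, perCorr_eq_autocorr, perCorr_eq_autocorr, Nat.cast_succ,
    Nat.cast_pred hk1, autocorr_add_sub_two_mul_add_autocorr_sub,
    autocorr_eq_sum_sum_of_support_subset hrun.injOn_natCast_sub_one
      fun x hx => hrun.exists_natCast_sub_one_of_fwdDiff_ne_zero hx,
    runVecPer, sum_filter, sum_product, neg_mul, mul_sum]
  refine congrArg Neg.neg (sum_congr rfl fun p hp => ?_)
  rw [mul_sum]
  refine sum_congr rfl fun q hq => ?_
  obtain ⟨hp1, hpγ⟩ := mem_Icc.1 hp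
  obtain ⟨hq1, hqγ⟩ := mem_Icc.1 hq
  rw [mul_ite, mul_zero, hrun.fwdDiff_mul_fwdDiff hbin h1n hp1 hpγ hq1 hqγ]
  exact if_congr (hrun.natCast_sub_one_eq_add_iff hr hp1 hpγ hq1 hqγ hk1 (by omega)) rfl rfl

theorem stmt_18 (n γ : ℕ) (hn : 1 ≤ n) (a : ℕ → ℤ)
    (hbin : ∀ i, 1 ≤ i → i ≤ n → a i = 1 ∨ a i = -1)
    (h0 : a 0 = 0)
    (hnc : ∃ i j, 1 ≤ i ∧ i ≤ n ∧ 1 ≤ j ∧ j ≤ n ∧ a i ≠ a j)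
    (h1n : a 1 ≠ a n)
    -- `I j` (for `1 ≤ j ≤ γ+1`) are the starting positions of the runs of `a`:
    (I : ℕ → ℕ) (hI1 : I 1 = 1) (hIlast : I (γ + 1) = n + 1)
    (hImono : ∀ j, 1 ≤ j → j ≤ γ → I j < I (j + 1))
    (hchange : ∀ j, 2 ≤ j → j ≤ γ → a (I j - 1) ≠ a (I j))
    (hconst : ∀ j, 1 ≤ j → j ≤ γ → ∀ p, I j ≤ p → p < I (j + 1) → a p = a (I j))
    -- the run length encoding `r`:
    (r : ℕ → ℕ) (hr : ∀ j, 1 ≤ j → j ≤ γ → r j = I (j + 1) - I j)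
    (k : ℕ) (hk1 : 1 ≤ k) (hk2 : k ≤ n - 1) :
    perCorr a n (k + 1) - 2 * perCorr a n k + perCorr a n (k - 1)
      = -4 * runVecPer r γ k :=
  stmt_18_general n γ a hbin h1n I hI1 hIlast hImono hchange hconst r hr k hk1 hk2
end
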